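/- arXiv:2412.05805 — 2 statements merged into one kernel-verified Lean document; each statement's English description precedes it below -/
import Mathlib

section
/- Let (C_k)_{k≥0} be nonnegative reals, not all zero, growing at most exponentially, and let r be the unique positive solution of r = Σ_{k=0}^∞ C_k r^{-k}. For each n, let r_n be the unique positive solution of r_n = Σ_{k=0}^n C_k r_n^{-k} (taking r_n = 0 if all C_0, …, C_n are zero). Then the sequence (r_n) is nondecreasing and converges to r. -/
theorem stmt_4 (C : ℕ → ℝ) (hC : ∀ k, 0 ≤ C k) (hne : ∃ k, C k ≠ 0)
    (B ρ : ℝ) (hB : 0 < B) (hρ : 0 < ρ) (hgrow : ∀ k, C k ≤ B * ρ ^ k)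
    (r : ℝ) (hr : 0 < r) (hsum : Summable (fun k => C k / r ^ k))
    (hreq : r = ∑' k, C k / r ^ k)
    (rn : ℕ → ℝ)
    (hrn : ∀ n, (∀ k ≤ n, C k = 0) → rn n = 0)
    (hrn' : ∀ n, (∃ k ≤ n, C k ≠ 0) →
      0 < rn n ∧ rn n = ∑ k ∈ Finset.range (n + 1), C k / rn n ^ k) :
    Monotone rn ∧ Filter.Tendsto rn Filter.atTop (nhds r) := by
  -- termwise monotonicity of sums
  have hterm : ∀ (k : ℕ) (x y : ℝ), 0 < x → x ≤ y → C k / y ^ k ≤ C k / x ^ k := by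
    intro k x y hx hxy
    gcongr
    exact hC k
  have hnn : ∀ (k : ℕ) (x : ℝ), 0 < x → 0 ≤ C k / x ^ k := fun k x hx =>
    div_nonneg (hC k) (pow_pos hx k).le
  -- key comparison lemma
  have key : ∀ (n : ℕ) (x y : ℝ), 0 < x → 0 < y →
      y = ∑ k ∈ Finset.range (n+1), C k / y ^ k →
      (∑ k ∈ Finset.range (n+1), C k / x ^ k) ≤ x → y ≤ x := by
    intro n x y hx hy hyeq hxle
    by_contra h
    push_neg at h
    have hle : ∑ k ∈ Finset.range (n+1), C k / y ^ k ≤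
        ∑ k ∈ Finset.range (n+1), C k / x ^ k :=
      Finset.sum_le_sum fun k _ => hterm k x y hx h.le
    rw [← hyeq] at hle
    linarith
  -- monotone
  have hmono : Monotone rn := by
    apply monotone_nat_of_le_succ
    intro n
    by_cases hex : ∃ k ≤ n, C k ≠ 0
    · obtain ⟨hpos, heq⟩ := hrn' n hex
      obtain ⟨k, hk, hk'⟩ := hex
      obtain ⟨hpos1, heq1⟩ := hrn' (n+1) ⟨k, hk.trans (Nat.le_succ n), hk'⟩
      apply key n _ _ hpos1 hpos heq
      calc ∑ k ∈ Finset.range (n+1), C k / rn (n+1) ^ k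
          ≤ ∑ k ∈ Finset.range (n+2), C k / rn (n+1) ^ k := by
            apply Finset.sum_le_sum_of_subset_of_nonneg
            · exact Finset.range_subset_range.mpr (by omega)
            · intro k _ _; exact hnn k _ hpos1
        _ = rn (n+1) := heq1.symm
    · push_neg at hex
      rw [hrn n hex]
      by_cases hex1 : ∃ k ≤ n+1, C k ≠ 0
      · exact (hrn' (n+1) hex1).1.le
      · push_neg at hex1
        rw [hrn (n+1) hex1]
  -- rn n ≤ r
  have hler : ∀ n, rn n ≤ r := by
    intro n
    by_cases hex : ∃ k ≤ n, C k ≠ 0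
    · obtain ⟨hpos, heq⟩ := hrn' n hex
      apply key n r _ hr hpos heq
      calc ∑ k ∈ Finset.range (n+1), C k / r ^ k
          ≤ ∑' k, C k / r ^ k := Summable.sum_le_tsum _ (fun k _ => hnn k r hr) hsum
        _ = r := hreq.symm
    · push_neg at hex
      rw [hrn n hex]
      exact hr.le
  have hbdd : BddAbove (Set.range rn) := ⟨r, by rintro _ ⟨n, rfl⟩; exact hler n⟩
  set L := ⨆ n, rn n with hL
  have htend : Filter.Tendsto rn Filter.atTop (nhds L) :=
    tendsto_atTop_ciSup hmono hbdd
  have hleL : ∀ n, rn n ≤ L := fun n => le_ciSup hbdd n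
  have hLr : L ≤ r := ciSup_le hler
  obtain ⟨N, hN⟩ := hne
  have hrnN : 0 < rn N := (hrn' N ⟨N, le_refl N, hN⟩).1
  have hLpos : 0 < L := hrnN.trans_le (hleL N)
  -- partial sums at L bounded by L
  have hpsum : ∀ m, ∑ k ∈ Finset.range m, C k / L ^ k ≤ L := by
    intro m
    set n := max m N with hn
    have hNn : N ≤ n := le_max_right _ _
    obtain ⟨hpos, heq⟩ := hrn' n ⟨N, hNn, hN⟩
    calc ∑ k ∈ Finset.range m, C k / L ^ k
        ≤ ∑ k ∈ Finset.range m, C k / rn n ^ k :=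
          Finset.sum_le_sum fun k _ => hterm k (rn n) L hpos (hleL n)
      _ ≤ ∑ k ∈ Finset.range (n+1), C k / rn n ^ k := by
          apply Finset.sum_le_sum_of_subset_of_nonneg
          · exact Finset.range_subset_range.mpr (by omega)
          · intro k _ _; exact hnn k _ hpos
      _ = rn n := heq.symm
      _ ≤ L := hleL n
  have hsumL : Summable (fun k => C k / L ^ k) :=
    summable_of_sum_range_le (fun k => hnn k L hLpos) hpsum
  have htsumL : ∑' k, C k / L ^ k ≤ L :=
    Summable.tsum_le_of_sum_range_le hsumL hpsum
  -- r ≤ L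
  have hrL : r ≤ L := by
    calc r = ∑' k, C k / r ^ k := hreq
      _ ≤ ∑' k, C k / L ^ k :=
          Summable.tsum_le_tsum (fun k => hterm k L r hLpos hLr) hsum hsumL
      _ ≤ L := htsumL
  have : L = r := le_antisymm hLr hrL
  rw [this] at htend
  exact ⟨hmono, htend⟩
end

section
/- Let (b_k)_{k≥0} be nonnegative reals with b_0 ≥ 1, growing at most exponentially, and let r > 1 be the unique positive solution of r = Σ_{k=0}^∞ b_k r^{-k}. Define the operator L on finitely supported sequences indexed by ℕ₀ by (L x)_0 = Σ_k b_k x_k and (L x)_{k+1} = x_k. Let Ψ_0 = (1, 0, 0, …). Then for every N, ‖L^N Ψ_0‖₁ ≤ ‖b‖₁ · r^N where b = (1, r^{-1}, r^{-2}, …), and hence limsup_{N→∞} ‖L^N Ψ_0‖₁^{1/N} ≤ r. -/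
theorem stmt_18 (b : ℕ → ℝ) (hb : ∀ k, 0 ≤ b k) (hb0 : 1 ≤ b 0)
    (B ρ : ℝ) (hB : 0 < B) (hρ : 0 < ρ) (hgrow : ∀ k, b k ≤ B * ρ ^ k)
    (r : ℝ) (hr : 1 < r) (hsum : Summable (fun k => b k / r ^ k))
    (hreq : r = ∑' k, b k / r ^ k)
    (Ψ : ℕ → (ℕ →₀ ℝ)) (hΨ0 : Ψ 0 = Finsupp.single 0 1)
    (hrec0 : ∀ N, Ψ (N + 1) 0 = ∑ k ∈ (Ψ N).support, b k * Ψ N k)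
    (hrec : ∀ N k, Ψ (N + 1) (k + 1) = Ψ N k) :
    (∀ N, (∑ k ∈ (Ψ N).support, |Ψ N k|) ≤ (∑' k : ℕ, r⁻¹ ^ k) * r ^ N) ∧
    Filter.limsup (fun N : ℕ =>
        (∑ k ∈ (Ψ N).support, |Ψ N k|) ^ ((1 : ℝ) / N)) Filter.atTop ≤ r := by
  have hr0 : (0:ℝ) < r := lt_trans one_pos hr
  have hrne : r ≠ 0 := ne_of_gt hr0
  -- shift lemma
  have hshift : ∀ k N, Ψ (N + k) k = Ψ N 0 := by
    intro k
    induction k with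
    | zero => intro N; rfl
    | succ k ih =>
      intro N
      have : N + (k + 1) = (N + k) + 1 := by ring
      rw [this, hrec, ih]
  -- vanishing
  have hzero : ∀ N k, N < k → Ψ N k = 0 := by
    intro N
    induction N with
    | zero =>
      intro k hk
      rw [hΨ0, Finsupp.single_apply, if_neg (by omega)]
    | succ N ih =>
      intro k hk
      obtain ⟨j, rfl⟩ : ∃ j, k = j + 1 := ⟨k - 1, by omega⟩
      rw [hrec]
      exact ih j (by omega)
  -- nonnegativity
  have hpos : ∀ N k, 0 ≤ Ψ N k := by
    intro N
    induction N with
    | zero =>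
      intro k
      rw [hΨ0, Finsupp.single_apply]
      split <;> norm_num
    | succ N ih =>
      intro k
      cases k with
      | zero =>
        rw [hrec0]
        exact Finset.sum_nonneg fun k _ => mul_nonneg (hb k) (ih k)
      | succ k => rw [hrec]; exact ih k
  have hval : ∀ N k, k ≤ N → Ψ N k = Ψ (N - k) 0 := by
    intro N k hk
    have := hshift k (N - k)
    rwa [Nat.sub_add_cancel hk] at this
  have hsupp : ∀ N, (Ψ N).support ⊆ Finset.range (N + 1) := by
    intro N k hk
    rw [Finset.mem_range]
    by_contra h
    exact Finsupp.mem_support_iff.mp hk (hzero N k (by omega))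
  have hsum_range : ∀ N (f : ℕ → ℝ),
      ∑ k ∈ (Ψ N).support, f k * Ψ N k = ∑ k ∈ Finset.range (N + 1), f k * Ψ N k := by
    intro N f
    refine Finset.sum_subset (hsupp N) ?_
    intro k _ hk
    rw [Finsupp.notMem_support_iff.mp hk, mul_zero]
  -- terms of the series are nonneg
  have hterm : ∀ k, 0 ≤ b k / r ^ k := fun k => div_nonneg (hb k) (pow_nonneg hr0.le k)
  -- a N ≤ r ^ N
  have ha : ∀ N, Ψ N 0 ≤ r ^ N := by
    intro N
    induction N using Nat.strong_induction_on with
    | _ N ih =>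
      cases N with
      | zero =>
        rw [hΨ0]
        simp
      | succ N =>
        rw [hrec0, hsum_range N b]
        have h1 : ∀ k ∈ Finset.range (N + 1), b k * Ψ N k ≤ r ^ N * (b k / r ^ k) := by
          intro k hk
          rw [Finset.mem_range] at hk
          have hk' : k ≤ N := by omega
          rw [hval N k hk']
          have h2 : Ψ (N - k) 0 ≤ r ^ (N - k) := ih (N - k) (by omega)
          have h3 : r ^ (N - k) = r ^ N / r ^ k := pow_sub₀ r hrne hk'
          calc b k * Ψ (N - k) 0 ≤ b k * (r ^ N / r ^ k) := by
                rw [← h3]; exact mul_le_mul_of_nonneg_left h2 (hb k)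
            _ = r ^ N * (b k / r ^ k) := by ring
        calc ∑ k ∈ Finset.range (N + 1), b k * Ψ N k
            ≤ ∑ k ∈ Finset.range (N + 1), r ^ N * (b k / r ^ k) :=
              Finset.sum_le_sum h1
          _ = r ^ N * ∑ k ∈ Finset.range (N + 1), b k / r ^ k := by
              rw [Finset.mul_sum]
          _ ≤ r ^ N * r := by
              refine mul_le_mul_of_nonneg_left ?_ (pow_nonneg hr0.le N)
              exact le_trans (Summable.sum_le_tsum _ (fun k _ => hterm k) hsum) (le_of_eq hreq.symm)
          _ = r ^ (N + 1) := by ring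
  -- geometric summability
  have hinv0 : (0:ℝ) ≤ r⁻¹ := inv_nonneg.mpr hr0.le
  have hinv1 : r⁻¹ < 1 := inv_lt_one_of_one_lt₀ hr
  have hgeo : Summable (fun k : ℕ => r⁻¹ ^ k) := summable_geometric_of_lt_one hinv0 hinv1
  set C : ℝ := ∑' k : ℕ, r⁻¹ ^ k with hC
  have hC1 : 1 ≤ C := by
    have := Summable.le_tsum hgeo 0 (fun i _ => pow_nonneg hinv0 i)
    rwa [pow_zero] at this
  have hC0 : 0 < C := lt_of_lt_of_le one_pos hC1
  -- first part
  have hmain : ∀ N, (∑ k ∈ (Ψ N).support, |Ψ N k|) ≤ C * r ^ N := by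
    intro N
    have habs : ∀ k, |Ψ N k| = Ψ N k := fun k => abs_of_nonneg (hpos N k)
    have e1 : (∑ k ∈ (Ψ N).support, |Ψ N k|)
        = ∑ k ∈ Finset.range (N + 1), Ψ N k := by
      simp_rw [habs]
      refine Finset.sum_subset (hsupp N) ?_
      intro k _ hk
      exact Finsupp.notMem_support_iff.mp hk
    rw [e1]
    have h1 : ∀ k ∈ Finset.range (N + 1), Ψ N k ≤ r ^ N * r⁻¹ ^ k := by
      intro k hk
      rw [Finset.mem_range] at hk
      have hk' : k ≤ N := by omega
      rw [hval N k hk']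
      calc Ψ (N - k) 0 ≤ r ^ (N - k) := ha (N - k)
        _ = r ^ N * r⁻¹ ^ k := by
            rw [pow_sub₀ r hrne hk', inv_pow]
    calc ∑ k ∈ Finset.range (N + 1), Ψ N k
        ≤ ∑ k ∈ Finset.range (N + 1), r ^ N * r⁻¹ ^ k := Finset.sum_le_sum h1
      _ = r ^ N * ∑ k ∈ Finset.range (N + 1), r⁻¹ ^ k := by rw [Finset.mul_sum]
      _ ≤ r ^ N * C := by
          refine mul_le_mul_of_nonneg_left ?_ (pow_nonneg hr0.le N)
          exact Summable.sum_le_tsum _ (fun k _ => pow_nonneg hinv0 k) hgeo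
      _ = C * r ^ N := mul_comm _ _
  refine ⟨hmain, ?_⟩
  -- second part
  set f : ℕ → ℝ := fun N => (∑ k ∈ (Ψ N).support, |Ψ N k|) ^ ((1:ℝ)/N) with hf
  set g : ℕ → ℝ := fun N => C ^ ((1:ℝ)/N) * r with hg
  have hSnn : ∀ N, (0:ℝ) ≤ ∑ k ∈ (Ψ N).support, |Ψ N k| :=
    fun N => Finset.sum_nonneg fun k _ => abs_nonneg _
  have hfg : ∀ᶠ N in Filter.atTop, f N ≤ g N := by
    filter_upwards [Filter.eventually_ge_atTop 1] with N hN
    have hNne : (N:ℝ) ≠ 0 := Nat.cast_ne_zero.mpr (by omega)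
    have hexp : (0:ℝ) ≤ (1:ℝ)/N := by positivity
    have h1 : f N ≤ (C * r ^ N) ^ ((1:ℝ)/N) :=
      Real.rpow_le_rpow (hSnn N) (hmain N) hexp
    refine h1.trans_eq ?_
    rw [Real.mul_rpow hC0.le (pow_nonneg hr0.le N), ← Real.rpow_natCast r N,
      ← Real.rpow_mul hr0.le]
    congr 1
    rw [mul_one_div, div_self hNne, Real.rpow_one]
  have hgt : Filter.Tendsto g Filter.atTop (nhds r) := by
    have h1 : Filter.Tendsto (fun N : ℕ => (1:ℝ)/N) Filter.atTop (nhds 0) :=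
      tendsto_one_div_atTop_nhds_zero_nat
    have h2 : Filter.Tendsto (fun N : ℕ => C ^ ((1:ℝ)/N)) Filter.atTop (nhds (C ^ (0:ℝ))) :=
      Filter.Tendsto.rpow tendsto_const_nhds h1 (Or.inl hC0.ne')
    rw [Real.rpow_zero] at h2
    have := h2.mul (tendsto_const_nhds (x := r))
    rwa [one_mul] at this
  have hfb : Filter.IsCoboundedUnder (· ≤ ·) Filter.atTop f := by
    exact Filter.IsBoundedUnder.isCoboundedUnder_le
      (Filter.isBoundedUnder_of ⟨0, fun N => Real.rpow_nonneg (hSnn N) _⟩)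
  have hgb : Filter.IsBoundedUnder (· ≤ ·) Filter.atTop g := hgt.isBoundedUnder_le
  calc Filter.limsup f Filter.atTop ≤ Filter.limsup g Filter.atTop :=
        Filter.limsup_le_limsup hfg hfb hgb
    _ = r := hgt.limsup_eq
end
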